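/- Let n be a positive integer, ω an n×n real matrix, and ξ ∈ ℝⁿ. Let 𝔤 = fromBlocks [[0, 0], [ξ, ω]] be the (n+1)×(n+1) real block matrix with top-left block 0, top-right block 0, bottom-left block ξ, bottom-right block ω. Then the matrix exponential satisfies exp(𝔤) = fromBlocks [[1, 0], [v(ω) ξ, exp(ω)]], where v(ω) := ∑_{k=0}^∞ ω^k / (k+1)!. -/

import Mathlib

/-!
Since `fromBlocks 0 0 C D ^ (k + 1) = fromBlocks 0 0 (D ^ k * C) (D ^ (k + 1))`, the exponential
series of `fromBlocks 0 0 C D` without its constant term can be summed block by block: the lower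
right block gives `exp D - 1` and the lower left block gives `(∑ D ^ k / (k + 1)!) * C`.
-/

open scoped Nat

/-- `v(ω) := ∑_{k=0}^∞ ω^k / (k+1)!`. -/
noncomputable def vMat (n : ℕ) (ω : Matrix (Fin n) (Fin n) ℝ) : Matrix (Fin n) (Fin n) ℝ :=
  ∑' k : ℕ, (((k + 1)! : ℝ)⁻¹) • ω ^ k

open Matrix NormedSpace

theorem HasSum.matrix_fromBlocks {X R l m n o : Type*} [AddCommMonoid R] [TopologicalSpace R]
    {L : SummationFilter X} {fA : X → Matrix n l R} {fB : X → Matrix n m R}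
    {fC : X → Matrix o l R} {fD : X → Matrix o m R} {A : Matrix n l R} {B : Matrix n m R}
    {C : Matrix o l R} {D : Matrix o m R} (hA : HasSum fA A L) (hB : HasSum fB B L)
    (hC : HasSum fC C L) (hD : HasSum fD D L) :
    HasSum (fun x => fromBlocks (fA x) (fB x) (fC x) (fD x)) (fromBlocks A B C D) L :=
  Pi.hasSum.2 fun i => Pi.hasSum.2 fun j => by
    rcases i with i | i <;> rcases j with j | j
    exacts [Pi.hasSum.1 (Pi.hasSum.1 hA i) j, Pi.hasSum.1 (Pi.hasSum.1 hB i) j,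
      Pi.hasSum.1 (Pi.hasSum.1 hC i) j, Pi.hasSum.1 (Pi.hasSum.1 hD i) j]

theorem Matrix.fromBlocks_zero_zero_pow_succ {m n α : Type*} [Fintype m] [Fintype n]
    [DecidableEq m] [DecidableEq n] [Semiring α] (C : Matrix n m α) (D : Matrix n n α) (k : ℕ) :
    fromBlocks (0 : Matrix m m α) 0 C D ^ (k + 1) = fromBlocks 0 0 (D ^ k * C) (D ^ (k + 1)) := by
  induction k with
  | zero => simp
  | succ k ih =>
    rw [pow_succ, ih, fromBlocks_multiply]
    simp [pow_succ, Matrix.mul_assoc]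

theorem NormedSpace.exp_eq_one_add_of_hasSum {𝕂 𝔸 : Type*} [Field 𝕂] [CharZero 𝕂] [Ring 𝔸]
    [Algebra 𝕂 𝔸] [TopologicalSpace 𝔸] [IsTopologicalRing 𝔸] [T2Space 𝔸] {x a : 𝔸}
    (h : HasSum (fun k : ℕ => ((k + 1)! : 𝕂)⁻¹ • x ^ (k + 1)) a) : exp x = 1 + a := by
  rw [exp_eq_tsum 𝕂]
  refine ((hasSum_nat_add_iff' 1).1 ?_).tsum_eq
  simpa using h

section Normed

variable {𝕂 𝔸 : Type*} [RCLike 𝕂] [NormedRing 𝔸] [NormedAlgebra 𝕂 𝔸] [CompleteSpace 𝔸]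

theorem summable_inv_factorial_succ_smul_pow (x : 𝔸) :
    Summable fun k : ℕ => ((k + 1)! : 𝕂)⁻¹ • x ^ k := by
  refine .of_norm_bounded_eventually_nat (Real.summable_pow_div_factorial ‖x‖)
    (Filter.eventually_atTop.2 ⟨1, fun k hk => ?_⟩)
  rw [norm_smul, norm_inv, RCLike.norm_natCast, div_eq_inv_mul]
  gcongr
  · exact k.le_succ
  · exact norm_pow_le' x hk

theorem NormedSpace.hasSum_inv_factorial_succ_smul_pow_succ (x : 𝔸) :
    HasSum (fun k : ℕ => ((k + 1)! : 𝕂)⁻¹ • x ^ (k + 1)) (exp x - 1) := by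
  simpa using (hasSum_nat_add_iff' 1).2 (exp_series_hasSum_exp' (𝕂 := 𝕂) x)

end Normed

section MatrixExp

-- Only the `n × n` blocks need a norm: convergence of the big series is read off its blocks.
attribute [local instance] Matrix.linftyOpNormedRing Matrix.linftyOpNormedAlgebra

variable {𝕂 : Type*} [RCLike 𝕂]

theorem Matrix.exp_fromBlocks_zero_zero {m n : Type*} [Fintype m] [Fintype n] [DecidableEq m]
    [DecidableEq n] (C : Matrix n m 𝕂) (D : Matrix n n 𝕂) :
    exp (fromBlocks (0 : Matrix m m 𝕂) 0 C D) =
      fromBlocks 1 0 ((∑' k : ℕ, ((k + 1)! : 𝕂)⁻¹ • D ^ k) * C) (exp D) := by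
  set V := ∑' k : ℕ, ((k + 1)! : 𝕂)⁻¹ • D ^ k
  have hVC : HasSum (fun k : ℕ => (((k + 1)! : 𝕂)⁻¹ • D ^ k) * C) (V * C) :=
    (summable_inv_factorial_succ_smul_pow D).hasSum.map (addMonoidHomMulRight C)
      (continuous_id.matrix_mul continuous_const)
  have hblocks : HasSum
      (fun k : ℕ => ((k + 1)! : 𝕂)⁻¹ • fromBlocks (0 : Matrix m m 𝕂) 0 C D ^ (k + 1))
      (fromBlocks 0 0 (V * C) (exp D - 1)) := by
    simp_rw [fromBlocks_zero_zero_pow_succ, fromBlocks_smul, smul_zero, ← Matrix.smul_mul]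
    exact hasSum_zero.matrix_fromBlocks hasSum_zero hVC (hasSum_inv_factorial_succ_smul_pow_succ D)
  rw [exp_eq_one_add_of_hasSum hblocks, ← fromBlocks_one, fromBlocks_add]
  simp

end MatrixExp

theorem exp_se_block_general (n : ℕ) (ω : Matrix (Fin n) (Fin n) ℝ) (ξ : Fin n → ℝ) :
    NormedSpace.exp
        (Matrix.fromBlocks (0 : Matrix (Fin 1) (Fin 1) ℝ) 0 (Matrix.replicateCol (Fin 1) ξ) ω) =
      Matrix.fromBlocks 1 0 (Matrix.replicateCol (Fin 1) ((vMat n ω).mulVec ξ)) (NormedSpace.exp ω) := by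
  rw [exp_fromBlocks_zero_zero, replicateCol_mulVec]
  rfl

/-- For the block matrix `𝔤 = fromBlocks [[0,0],[ξ,ω]]`,
`exp 𝔤 = fromBlocks [[1,0],[v(ω) ξ, exp ω]]`. -/
theorem exp_se_block (n : ℕ) (hn : 0 < n) (ω : Matrix (Fin n) (Fin n) ℝ) (ξ : Fin n → ℝ) :
    NormedSpace.exp
        (Matrix.fromBlocks (0 : Matrix (Fin 1) (Fin 1) ℝ) 0 (Matrix.replicateCol (Fin 1) ξ) ω) =
      Matrix.fromBlocks 1 0 (Matrix.replicateCol (Fin 1) ((vMat n ω).mulVec ξ)) (NormedSpace.exp ω) :=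
  exp_se_block_general n ω ξ
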